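/- arXiv:2406.03217 — 3 statements merged into one kernel-verified Lean document; each statement's English description precedes it below -/
import Mathlib

section
/- Any optimal solution x* of the augmented ε-constraint (AUGMECON) scalarized problem min [f1(x) − δ·s] subject to f2(x) + s = e, s ≥ 0, x ∈ F, where δ > 0, is Pareto optimal for the biobjective minimization problem (f1, f2) over F. -/
def Dominates {X : Type*} (f1 f2 : X → ℝ) (x y : X) : Prop :=
  f1 x ≤ f1 y ∧ f2 x ≤ f2 y ∧ (f1 x < f1 y ∨ f2 x < f2 y)

/-- Any optimal solution of the augmented ε-constraint (AUGMECON) scalarization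
is Pareto optimal. -/
theorem augmecon_opt_pareto {X : Type*} (F : Set X) (f1 f2 : X → ℝ)
    (e δ : ℝ) (hδ : 0 < δ) (xstar : X) (sstar : ℝ)
    (hfeas : xstar ∈ F) (hs : 0 ≤ sstar) (heq : f2 xstar + sstar = e)
    (hopt : ∀ x ∈ F, ∀ s : ℝ, 0 ≤ s → f2 x + s = e →
      f1 xstar - δ * sstar ≤ f1 x - δ * s) :
    ¬ ∃ y ∈ F, Dominates f1 f2 y xstar := by
  rintro ⟨y, hyF, h1, h2, h3⟩
  have hsy : (0:ℝ) ≤ e - f2 y := by linarith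
  have := hopt y hyF (e - f2 y) hsy (by ring)
  rcases h3 with h | h <;> nlinarith
end

section
/- If both objective values f1 and f2 take only integer values on F, and x* solves the lexicographic problem of minimizing f1 subject to f2(x) ≤ e and, among such minimizers, maximizing the slack e − f2(x), then x* is Pareto optimal; equivalently, for integer-valued objectives, the augmented ε-constraint problem with 0 < δ < 1/(range of f2) yields only Pareto optimal solutions. -/
def DominatesZ {X : Type*} (f1 f2 : X → ℤ) (x y : X) : Prop :=
  f1 x ≤ f1 y ∧ f2 x ≤ f2 y ∧ (f1 x < f1 y ∨ f2 x < f2 y)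

/-- For integer-valued objectives: a lexicographic optimum of (min f1, then max slack
e − f2) in the ε-constraint problem is Pareto optimal; equivalently, the augmented
ε-constraint problem with 0 < δ < 1/r2 yields only Pareto optimal solutions. -/
theorem augmecon2_integer_pareto {X : Type*} [Fintype X] [Nonempty X]
    (f1 f2 : X → ℤ) (e : ℤ) (r2 : ℤ)
    (hr2 : r2 = Finset.univ.sup' Finset.univ_nonempty f2
              - Finset.univ.inf' Finset.univ_nonempty f2)
    (hr2pos : 0 < r2) :
    (∀ xstar : X, f2 xstar ≤ e →
      (∀ y : X, f2 y ≤ e → f1 xstar ≤ f1 y) →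
      (∀ y : X, f2 y ≤ e → f1 y = f1 xstar → e - f2 y ≤ e - f2 xstar) →
      ¬ ∃ y : X, DominatesZ f1 f2 y xstar) ∧
    (∀ δ : ℝ, 0 < δ → δ < 1 / (r2 : ℝ) →
      ∀ xstar : X, f2 xstar ≤ e →
      (∀ y : X, f2 y ≤ e →
        (f1 xstar : ℝ) - δ * ((e : ℝ) - (f2 xstar : ℝ))
          ≤ (f1 y : ℝ) - δ * ((e : ℝ) - (f2 y : ℝ))) →
      ¬ ∃ y : X, DominatesZ f1 f2 y xstar) := by
  constructor
  · rintro xstar hxe hmin hslack ⟨y, h1, h2, h3⟩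
    have hye : f2 y ≤ e := h2.trans hxe
    have heq1 : f1 y = f1 xstar := le_antisymm h1 (hmin y hye)
    have heq2 : f2 xstar ≤ f2 y := by
      have := hslack y hye heq1; omega
    omega
  · rintro δ hδ hδr xstar hxe hopt ⟨y, h1, h2, h3⟩
    have hye : f2 y ≤ e := h2.trans hxe
    have key := hopt y hye
    have h2r : (f2 y : ℝ) ≤ (f2 xstar : ℝ) := by exact_mod_cast h2
    have h1' : (f1 xstar : ℝ) ≤ (f1 y : ℝ) := by nlinarith
    have heq1 : f1 y = f1 xstar := le_antisymm h1 (by exact_mod_cast h1')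
    have heq1' : (f1 y : ℝ) = (f1 xstar : ℝ) := by exact_mod_cast heq1
    have heq2 : (f2 xstar : ℝ) ≤ (f2 y : ℝ) := by nlinarith
    have : f2 xstar ≤ f2 y := by exact_mod_cast heq2
    omega
end

section
/- The bypass coefficient skip in AUGMECON2 is sound: let x* be optimal for min f1(x) s.t. f2(x) ≤ e_i = ub2 − i·(r2/g2) with surplus S2 = e_i − f2(x*) ≥ 0, and let b = ⌊S2/(r2/g2)⌋. Then for every integer i' with i ≤ i' ≤ i + b, x* is also optimal for the problem with right-hand side e_{i'} = ub2 − i'·(r2/g2), so the grid points i+1, …, i+b can be skipped without losing optimal solutions. -/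
/-- Soundness of the bypass coefficient in AUGMECON2: if x* is optimal for the
ε-constraint problem at grid point i with surplus S2, then it remains optimal for
all grid points i' with i ≤ i' ≤ i + ⌊S2/step⌋. -/
theorem augmecon2_bypass_sound {X : Type*} (F : Set X) (f1 f2 : X → ℝ)
    (ub2 r2 : ℝ) (g2 : ℕ) (hg2 : 1 ≤ g2) (hr2 : 0 < r2)
    (e : ℤ → ℝ) (he : ∀ k : ℤ, e k = ub2 - (k : ℝ) * (r2 / (g2 : ℝ)))
    (i : ℤ) (xstar : X)
    (hfeas : xstar ∈ F) (hcon : f2 xstar ≤ e i)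
    (hopt : ∀ y ∈ F, f2 y ≤ e i → f1 xstar ≤ f1 y)
    (hS2 : 0 ≤ e i - f2 xstar) :
    ∀ i' : ℤ, i ≤ i' → i' ≤ i + ⌊(e i - f2 xstar) / (r2 / (g2 : ℝ))⌋ →
      f2 xstar ≤ e i' ∧ ∀ y ∈ F, f2 y ≤ e i' → f1 xstar ≤ f1 y := by
  intro i' hlo hhi
  have hstep : (0:ℝ) < r2 / (g2:ℝ) := by
    apply div_pos hr2
    exact_mod_cast Nat.lt_of_lt_of_le Nat.zero_lt_one hg2
  have hle : e i' ≤ e i := by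
    rw [he, he]
    have : (i:ℝ) * (r2/(g2:ℝ)) ≤ (i':ℝ) * (r2/(g2:ℝ)) := by
      apply mul_le_mul_of_nonneg_right _ hstep.le
      exact_mod_cast hlo
    linarith
  constructor
  · rw [he i']
    have h1 : ((i':ℝ) - i) * (r2/(g2:ℝ)) ≤ e i - f2 xstar := by
      have hfl : (⌊(e i - f2 xstar) / (r2 / (g2 : ℝ))⌋ : ℝ) * (r2/(g2:ℝ)) ≤ e i - f2 xstar := by
        rw [← le_div_iff₀ hstep]
        exact Int.floor_le _
      calc ((i':ℝ) - i) * (r2/(g2:ℝ)) ≤ (⌊(e i - f2 xstar) / (r2 / (g2 : ℝ))⌋ : ℝ) * (r2/(g2:ℝ)) := by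
            apply mul_le_mul_of_nonneg_right _ hstep.le
            have : (i':ℝ) ≤ i + ⌊(e i - f2 xstar) / (r2 / (g2 : ℝ))⌋ := by exact_mod_cast hhi
            linarith
        _ ≤ e i - f2 xstar := hfl
    rw [he i] at h1
    linarith [h1]
  · intro y hy hcy
    exact hopt y hy (le_trans hcy hle)
end
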